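/- arXiv:1311.5179 — 2 statements merged into one kernel-verified Lean document; each statement's English description precedes it below -/
import Mathlib

section
/- Let v̂, v ∈ ℝ^p with ‖v̂ - v‖² ≤ ε², ‖v‖ = 1, and suppose v is supported on a set Q of size k with |v_i| ≥ θ/√k for all i ∈ Q. Let B = {i : |v̂_i| ≥ θ/(2√k)}. Then the symmetric difference satisfies |B △ Q| ≤ 4ε²k/θ². -/
open scoped symmDiff

/-!
Every coordinate of `B △ Q` is one where `v̂` and `v` differ by at least `c = θ / (2√k)`:
off `Q` because `v` vanishes there while `|v̂_i| ≥ c`, on `Q` because `|v_i| ≥ 2c` while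
`|v̂_i| < c`. By Markov's inequality for the squared coordinates of `v̂ - v`, there are at most
`‖v̂ - v‖² / c² = 4‖v̂ - v‖²k/θ²` such coordinates.
-/

theorem le_abs_sub_of_mem_symmDiff {ι : Type*} {v w : ι → ℝ} {Q : Set ι} {c : ℝ}
    (hsupp : ∀ i ∉ Q, v i = 0) (hlow : ∀ i ∈ Q, 2 * c ≤ |v i|) {i : ι}
    (hi : i ∈ {i | c ≤ |w i|} ∆ Q) : c ≤ |w i - v i| := by
  rcases hi with ⟨hw, hiQ⟩ | ⟨hiQ, hw⟩
  · simpa [hsupp i hiQ] using hw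
  · have hw : |w i| < c := not_le.mp hw
    linarith [hlow i hiQ, abs_sub_abs_le_abs_sub (v i) (w i),
      abs_sub_comm (v i) (w i)]

theorem EuclideanSpace.ncard_le_abs_mul_sq_le_norm_sq {ι : Type*} [Fintype ι]
    (x : EuclideanSpace ℝ ι) {c : ℝ} (hc : 0 ≤ c) :
    ({i | c ≤ |x i|}.ncard : ℝ) * c ^ 2 ≤ ‖x‖ ^ 2 := by
  classical
  rw [Set.ncard_eq_toFinset_card', Set.toFinset_ofPred, EuclideanSpace.real_norm_sq_eq,
    ← nsmul_eq_mul]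
  calc _ ≤ ∑ i ∈ Finset.univ.filter (fun i => c ≤ |x i|), x i ^ 2 :=
        Finset.card_nsmul_le_sum _ _ _ fun i hi => by
          simpa only [sq_abs] using pow_le_pow_left₀ hc (Finset.mem_filter.mp hi).2 2
    _ ≤ ∑ i, x i ^ 2 :=
        Finset.sum_le_sum_of_subset_of_nonneg (Finset.filter_subset _ _)
          fun i _ _ => sq_nonneg _

theorem stmt_6_general (p k : ℕ) (hk : 0 < k) (θ ε : ℝ) (hθ : 0 < θ)
    (v vhat : EuclideanSpace ℝ (Fin p))
    (Q : Finset (Fin p))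
    (hsupp : ∀ i, i ∉ Q → v i = 0)
    (hlow : ∀ i ∈ Q, θ / Real.sqrt k ≤ |v i|)
    (hclose : ‖vhat - v‖ ^ 2 ≤ ε ^ 2) :
    ((({i : Fin p | θ / (2 * Real.sqrt k) ≤ |vhat i|} ∆ (↑Q : Set (Fin p))).ncard : ℝ)) ≤
      4 * ε ^ 2 * k / θ ^ 2 := by
  set c := θ / (2 * Real.sqrt k)
  have hc : 0 < c := by positivity
  have hc_sq : c ^ 2 = θ ^ 2 / (4 * k) := by
    rw [div_pow, mul_pow, Real.sq_sqrt k.cast_nonneg]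
    norm_num
  have h2c : 2 * c = θ / Real.sqrt k := by
    rw [← mul_div_assoc, mul_div_mul_left _ _ two_ne_zero]
  have hsubset : {i | c ≤ |vhat i|} ∆ (↑Q : Set (Fin p)) ⊆ {i | c ≤ |(vhat - v) i|} :=
    fun i hi => by
      simpa using le_abs_sub_of_mem_symmDiff hsupp
        (fun i hi => h2c ▸ hlow i hi) hi
  have hbound : 4 * ε ^ 2 * k / θ ^ 2 = ε ^ 2 / c ^ 2 := by
    rw [hc_sq]
    field_simp
  rw [hbound, le_div_iff₀ (by positivity)]
  calc _ ≤ ({i | c ≤ |(vhat - v) i|}.ncard : ℝ) * c ^ 2 := by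
        gcongr
        exact Set.toFinite _
    _ ≤ ‖vhat - v‖ ^ 2 := EuclideanSpace.ncard_le_abs_mul_sq_le_norm_sq (vhat - v) hc.le
    _ ≤ ε ^ 2 := hclose

/-- If `‖v̂ - v‖² ≤ ε²`, `‖v‖ = 1`, `v` is supported on `Q` of size `k` with
`|v_i| ≥ θ/√k` on `Q`, and `B = {i : |v̂_i| ≥ θ/(2√k)}`, then
`|B △ Q| ≤ 4ε²k/θ²`. -/
theorem stmt_6 (p k : ℕ) (hk : 0 < k) (θ ε : ℝ) (hθ : 0 < θ)
    (v vhat : EuclideanSpace ℝ (Fin p)) (hv : ‖v‖ = 1)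
    (Q : Finset (Fin p)) (hQcard : Q.card = k)
    (hsupp : ∀ i, i ∉ Q → v i = 0)
    (hlow : ∀ i ∈ Q, θ / Real.sqrt k ≤ |v i|)
    (hclose : ‖vhat - v‖ ^ 2 ≤ ε ^ 2) :
    ((({i : Fin p | θ / (2 * Real.sqrt k) ≤ |vhat i|} ∆ (↑Q : Set (Fin p))).ncard : ℝ)) ≤
      4 * ε ^ 2 * k / θ ^ 2 :=
  stmt_6_general p k hk θ ε hθ v vhat Q hsupp hlow hclose
end

section
/- Let v̂, v ∈ ℝ^p with ‖v̂ - v‖ ≤ ε, where v is supported on Q with |v_i| ≥ θ/√k for i ∈ Q, |Q| = k. Define s ∈ ℝ^p by s_i = v̂_i · 1{|v̂_i| ≥ θ/(2√k)}. Then ‖s - v‖² ≤ 5ε². -/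
/-- If `‖v̂ - v‖ ≤ ε`, `v` supported on `Q` of size `k` with `|v_i| ≥ θ/√k` on `Q`,
and `s` is obtained from `v̂` by zeroing entries smaller than `θ/(2√k)`, then
`‖s - v‖² ≤ 5ε²`. -/
theorem stmt_7 (p k : ℕ) (hk : 0 < k) (θ ε : ℝ) (hθ : 0 < θ)
    (v vhat : EuclideanSpace ℝ (Fin p))
    (Q : Finset (Fin p)) (hQcard : Q.card = k)
    (hsupp : ∀ i, i ∉ Q → v i = 0)
    (hlow : ∀ i ∈ Q, θ / Real.sqrt k ≤ |v i|)
    (hclose : ‖vhat - v‖ ≤ ε)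
    (s : EuclideanSpace ℝ (Fin p))
    (hs : ∀ i, s i = if θ / (2 * Real.sqrt k) ≤ |vhat i| then vhat i else 0) :
    ‖s - v‖ ^ 2 ≤ 5 * ε ^ 2 := by
  have hnorm : ∀ x : EuclideanSpace ℝ (Fin p), ‖x‖ ^ 2 = ∑ i, (x i) ^ 2 := by
    intro x
    rw [EuclideanSpace.norm_eq, Real.sq_sqrt (by positivity)]
    simp [sq_abs]
  have hτ : 0 < θ / (2 * Real.sqrt k) := by
    have : (0:ℝ) < Real.sqrt k := Real.sqrt_pos.mpr (by exact_mod_cast hk)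
    positivity
  have key : ∀ i, (s i - v i) ^ 2 ≤ 4 * (vhat i - v i) ^ 2 := by
    intro i
    rw [hs i]
    split_ifs with h
    · nlinarith [sq_nonneg (vhat i - v i)]
    · simp only [zero_sub]
      by_cases hiQ : i ∈ Q
      · have h1 := hlow i hiQ
        have h2 : θ / Real.sqrt k = 2 * (θ / (2 * Real.sqrt k)) := by
          field_simp
        push_neg at h
        have habs : |v i| - |vhat i| ≤ |vhat i - v i| := by
          have := abs_sub_abs_le_abs_sub (v i) (vhat i)
          rwa [abs_sub_comm] at this
        nlinarith [abs_nonneg (vhat i), sq_abs (v i), sq_abs (vhat i - v i),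
          abs_nonneg (vhat i - v i), hτ.le]
      · rw [hsupp i hiQ]
        simp
        positivity
  have hε : 0 ≤ ε := le_trans (norm_nonneg _) hclose
  have h4 : ‖s - v‖ ^ 2 ≤ 4 * ‖vhat - v‖ ^ 2 := by
    rw [hnorm, hnorm, Finset.mul_sum]
    apply Finset.sum_le_sum
    intro i _
    simpa using key i
  have : ‖vhat - v‖ ^ 2 ≤ ε ^ 2 := by
    exact pow_le_pow_left₀ (norm_nonneg _) hclose 2
  nlinarith
end
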